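/- arXiv:2002.09520 — 6 statements merged into one kernel-verified Lean document; each statement's English description precedes it below -/
import Mathlib

section
/- (Opposite Sign Lemma, Margulis.) Let g and h be affine transformations of ℝ³ whose linear parts A_g and A_h preserve the Lorentzian bilinear form B. Suppose there exist real numbers λ_g, λ_h > 1 and vectors w_g⁺, w_g⁻, w_g, w_h⁺, w_h⁻, w_h ∈ ℝ³ such that for each f ∈ {g,h}: A_f w_f⁺ = λ_f w_f⁺, A_f w_f⁻ = λ_f⁻¹ w_f⁻, A_f w_f = w_f, B(w_f, w_f) = 1, B(w_f⁺, w_f⁻) < 0, and the determinant of the 3×3 matrix whose columns are w_f⁺, w_f⁻, w_f is positive. Define the Margulis invariants α(g) = B(g(0), w_g) and α(h) = B(h(0), w_h). If α(g)·α(h) ≤ 0, then the subgroup of the affine group generated by g and h does not act properly discontinuously on ℝ³. -/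
noncomputable section

/-- The vector space `ℝⁿ`. -/
abbrev V (n : ℕ) : Type := Fin n → ℝ

/-- The group of affine transformations of `ℝⁿ` (invertible affine self-maps). -/
abbrev Aff (n : ℕ) : Type := V n ≃ᵃ[ℝ] V n

/-- An action (given by `act`) of `Γ` on a topological space `X` is properly discontinuous if
for all compact `K L ⊆ X`, only finitely many `γ` satisfy `act γ '' K ∩ L ≠ ∅`. -/
def ProperlyDisc {Γ : Type*} {X : Type*} [TopologicalSpace X] (act : Γ → X → X) : Prop :=
  ∀ K L : Set X, IsCompact K → IsCompact L → {γ : Γ | (act γ '' K ∩ L).Nonempty}.Finite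

/-- The Lorentzian bilinear form on `ℝ³`. -/
def B3 (v w : Fin 3 → ℝ) : ℝ := v 0 * w 0 + v 1 * w 1 - v 2 * w 2

/-- The 3×3 matrix with the given three columns. -/
def colMatrix (c₀ c₁ c₂ : Fin 3 → ℝ) : Matrix (Fin 3) (Fin 3) ℝ :=
  Matrix.of fun i j => ![c₀, c₁, c₂] j i

/-!
If the Margulis invariant of `f ∈ {g, h}` vanishes, the powers of `f` fix a point of its axis.
Otherwise call `D` the element with `α > 0` and `E` the one with `α < 0`, replacing `D` by `D⁻¹`
if `w_E⁺` is orthogonal to `w_D⁻`. The elements `γ_k = D ^ m_k * E ^ k` with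
`m_k α(D) ≈ k |α(E)|` are pairwise distinct, yet they all map a point of a fixed compact set into
another fixed compact set. The point `x_k` lies on the expanding line of `E` through its axis, at
distance `O(k λ_E⁻ᵏ)`, placed so that `E ^ k x_k` has no component along the expanding direction
of `D`; then `D ^ m_k` contracts its `w_D⁻`-component, and the translation `m_k α(D)` along `w_D`
cancels the drift `k α(E) w_E`, whose `w_D`-component has the right sign by the orientation
conditions.
-/

namespace OppositeSign

section Lorentz

@[simp] lemma B3_add_left (x y z : V 3) : B3 (x + y) z = B3 x z + B3 y z := by
  simp only [B3, Pi.add_apply]; ring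

@[simp] lemma B3_sub_left (x y z : V 3) : B3 (x - y) z = B3 x z - B3 y z := by
  simp only [B3, Pi.sub_apply]; ring

@[simp] lemma B3_smul_left (a : ℝ) (x z : V 3) : B3 (a • x) z = a * B3 x z := by
  simp only [B3, Pi.smul_apply, smul_eq_mul]; ring

@[simp] lemma B3_smul_right (a : ℝ) (x z : V 3) : B3 x (a • z) = a * B3 x z := by
  simp only [B3, Pi.smul_apply, smul_eq_mul]; ring

@[simp] lemma B3_neg_right (x z : V 3) : B3 x (-z) = -B3 x z := by
  simp only [B3, Pi.neg_apply]; ring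

@[simp] lemma B3_zero_left (z : V 3) : B3 0 z = 0 := by simp [B3]

lemma B3_comm (x y : V 3) : B3 x y = B3 y x := by simp only [B3]; ring

def lorentzCross (x y : V 3) : V 3 :=
  ![x 1 * y 2 - x 2 * y 1, x 2 * y 0 - x 0 * y 2, x 1 * y 0 - x 0 * y 1]

lemma det_colMatrix (x y z : V 3) :
    (colMatrix x y z).det = x 0 * (y 1 * z 2 - y 2 * z 1) - y 0 * (x 1 * z 2 - x 2 * z 1)
      + z 0 * (x 1 * y 2 - x 2 * y 1) := by
  simp [colMatrix, Matrix.det_fin_three]; ring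

lemma B3_lorentzCross (x y z : V 3) : B3 (lorentzCross x y) z = (colMatrix x y z).det := by
  simp [lorentzCross, B3, det_colMatrix]; ring

lemma B3_lorentzCross_lorentzCross (a b c d : V 3) :
    B3 (lorentzCross a b) (lorentzCross c d) = B3 a d * B3 b c - B3 a c * B3 b d := by
  simp [lorentzCross, B3]; ring

lemma colMatrix_mulVec (a b c x : V 3) :
    (colMatrix a b c).mulVec x = x 0 • a + x 1 • b + x 2 • c := by
  ext i; simp [colMatrix, Matrix.mulVec, dotProduct, Fin.sum_univ_three]; ring

lemma exists_eq_combination_of_det_ne_zero {a b c : V 3} (h : (colMatrix a b c).det ≠ 0)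
    (v : V 3) : ∃ x y z : ℝ, v = x • a + y • b + z • c := by
  obtain ⟨x, hx⟩ := Matrix.mulVec_surjective_iff_isUnit.mpr
    ((Matrix.isUnit_iff_isUnit_det _).mpr h.isUnit) v
  exact ⟨x 0, x 1, x 2, by rw [← hx, colMatrix_mulVec]⟩

lemma mul_B3_map_of_apply_eq_smul {A : V 3 → V 3} (hA : ∀ v w, B3 (A v) (A w) = B3 v w)
    {c : ℝ} {y : V 3} (hy : A y = c • y) (v : V 3) : c * B3 (A v) y = B3 v y := by
  rw [← hA v y, hy, B3_smul_right]

lemma B3_eq_zero_of_apply_eq_smul {A : V 3 → V 3} (hA : ∀ v w, B3 (A v) (A w) = B3 v w)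
    {a b : ℝ} {x y : V 3} (hx : A x = a • x) (hy : A y = b • y) (hab : a * b ≠ 1) :
    B3 x y = 0 := by
  have h := mul_B3_map_of_apply_eq_smul hA hy x
  rw [hx, B3_smul_left] at h
  have : (a * b - 1) * B3 x y = 0 := by linear_combination h
  exact (mul_eq_zero.mp this).resolve_left (sub_ne_zero.mpr hab)

end Lorentz

lemma add_one_div_pow_le {l : ℝ} (hl : 1 < l) (m : ℕ) : (m + 1) / l ^ m ≤ l / (l - 1) := by
  rw [div_le_div_iff₀ (pow_pos (by linarith) m) (by linarith)]
  have h := one_add_mul_sub_le_pow (by linarith : (-1 : ℝ) ≤ l) m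
  nlinarith [mul_le_mul_of_nonneg_left h (by linarith : (0 : ℝ) ≤ l - 1),
    mul_nonneg (Nat.cast_nonneg (α := ℝ) m) (by linarith : (0 : ℝ) ≤ l - 1)]

lemma abs_add_mul_div_pow_le {l K a b : ℝ} (hl : 1 < l) (hK : 0 ≤ K) {k m : ℕ}
    (hkm : (k : ℝ) ≤ K * m) : |a + k * b| / l ^ m ≤ (|a| + K * |b|) * (l / (l - 1)) := by
  have hnum : |a + k * b| ≤ (|a| + K * |b|) * (m + 1) := by
    calc |a + k * b| ≤ |a| + k * |b| := by
          simpa only [abs_mul, Nat.abs_cast] using abs_add_le a (k * b)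
      _ ≤ |a| + K * m * |b| := by gcongr
      _ ≤ (|a| + K * |b|) * (m + 1) := by
          nlinarith [abs_nonneg a, mul_nonneg hK (abs_nonneg b), Nat.cast_nonneg (α := ℝ) m]
  calc |a + k * b| / l ^ m ≤ (|a| + K * |b|) * (m + 1) / l ^ m := by
        gcongr
    _ = (|a| + K * |b|) * ((m + 1) / l ^ m) := mul_div_assoc _ _ _
    _ ≤ (|a| + K * |b|) * (l / (l - 1)) :=
        mul_le_mul_of_nonneg_left (add_one_div_pow_le hl m) (by positivity)

lemma le_ceil_div_mul_lt {α y : ℝ} (hα : 0 < α) (hy : 0 ≤ y) :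
    y ≤ ⌈y / α⌉₊ * α ∧ ⌈y / α⌉₊ * α < y + α := by
  constructor
  · rw [← div_le_iff₀ hα]; exact Nat.le_ceil _
  · have := Nat.ceil_lt_add_one (div_nonneg hy hα.le)
    rwa [← lt_div_iff₀ hα, add_div, div_self hα.ne']

lemma injective_pow_mul_pow {G : Type*} [Group G] {a b : G}
    (h : ∀ j δ : ℕ, δ ≠ 0 → a ^ j * b ^ δ ≠ 1) {m : ℕ → ℕ} (hm : Monotone m) :
    Function.Injective fun k => a ^ m k * b ^ k := by
  refine Function.Injective.of_lt_imp_ne fun k k' hk heq => ?_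
  obtain ⟨j, hj⟩ := Nat.exists_eq_add_of_le (hm hk.le)
  obtain ⟨δ, rfl⟩ := Nat.exists_eq_add_of_le hk.le
  refine h j δ (by omega) ?_
  have : a ^ m k * b ^ k = a ^ m k * (a ^ j * b ^ δ * b ^ k) := by
    rw [heq, hj, add_comm k δ, pow_add, pow_add]
    simp only [mul_assoc]
  exact mul_eq_right.mp (mul_left_cancel this).symm

lemma not_properlyDisc_of_injective_of_bounded (S : Subgroup (Aff 3)) {c : ℕ → Aff 3}
    (hc : ∀ n, c n ∈ S) (hinj : Function.Injective c) (x : ℕ → V 3) {R₁ R₂ : ℝ}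
    (hx : ∀ n, ‖x n‖ ≤ R₁) (hcx : ∀ n, ‖c n (x n)‖ ≤ R₂) :
    ¬ ProperlyDisc (fun (γ : S) (y : V 3) => (γ : Aff 3) y) := by
  intro hPD
  refine Set.infinite_range_of_injective (f := fun n => (⟨c n, hc n⟩ : S))
    (fun m n h => hinj (congrArg Subtype.val h))
    ((hPD _ _ (isCompact_closedBall 0 R₁) (isCompact_closedBall 0 R₂)).subset ?_)
  rintro _ ⟨n, rfl⟩
  exact ⟨c n (x n), ⟨x n, mem_closedBall_zero_iff.mpr (hx n), rfl⟩,
    mem_closedBall_zero_iff.mpr (hcx n)⟩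

lemma affine_apply_add (f : Aff 3) (x v : V 3) : f (x + v) = f x + f.linear v := by
  rw [add_comm x v, ← vadd_eq_add, f.map_vadd, vadd_eq_add, add_comm]

lemma linear_pow_apply_of_apply_eq_smul {f : Aff 3} {c : ℝ} {v : V 3} (h : f.linear v = c • v)
    (m : ℕ) : (f ^ m).linear v = c ^ m • v := by
  induction m with
  | zero => rw [pow_zero, pow_zero, one_smul]; rfl
  | succ m ih =>
    change (f ^ m).linear (f.linear v) = _
    rw [h, map_smul, ih, smul_smul, pow_succ']

/-- An affine transformation `f` bundled with the data of the theorem's hypotheses: `l = λ_f`,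
`wp = w_f⁺`, `wm = w_f⁻`, `w = w_f`. -/
structure HyperbolicAffine where
  f : Aff 3
  l : ℝ
  wp : V 3
  wm : V 3
  w : V 3
  one_lt_l : 1 < l
  isometry : ∀ u v, B3 (f.linear u) (f.linear v) = B3 u v
  map_wp : f.linear wp = l • wp
  map_wm : f.linear wm = l⁻¹ • wm
  map_w : f.linear w = w
  B3_w_w : B3 w w = 1
  B3_wp_wm_neg : B3 wp wm < 0
  det_pos : 0 < (colMatrix wp wm w).det

namespace HyperbolicAffine

variable (D : HyperbolicAffine)

def margulis : ℝ := B3 (D.f 0) D.w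

lemma l_pos : 0 < D.l := zero_lt_one.trans D.one_lt_l

lemma B3_wp_wm_ne_zero : B3 D.wp D.wm ≠ 0 := D.B3_wp_wm_neg.ne

lemma B3_wp_wp : B3 D.wp D.wp = 0 :=
  B3_eq_zero_of_apply_eq_smul D.isometry D.map_wp D.map_wp (by nlinarith [D.one_lt_l])

lemma B3_wm_wm : B3 D.wm D.wm = 0 := by
  refine B3_eq_zero_of_apply_eq_smul D.isometry D.map_wm D.map_wm ?_
  rw [← mul_inv, inv_ne_one]
  nlinarith [D.one_lt_l]

lemma B3_wp_w : B3 D.wp D.w = 0 :=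
  B3_eq_zero_of_apply_eq_smul D.isometry D.map_wp (b := 1) (by rw [D.map_w, one_smul])
    (by rw [mul_one]; exact D.one_lt_l.ne')

lemma B3_wm_w : B3 D.wm D.w = 0 :=
  B3_eq_zero_of_apply_eq_smul D.isometry D.map_wm (b := 1) (by rw [D.map_w, one_smul])
    (by rw [mul_one]; exact inv_ne_one.mpr D.one_lt_l.ne')

lemma wp_ne_zero : D.wp ≠ 0 := by
  intro h
  simpa [h] using D.B3_wp_wm_neg

lemma repr (v : V 3) :
    v = (B3 v D.wm / B3 D.wp D.wm) • D.wp + (B3 v D.wp / B3 D.wp D.wm) • D.wm + B3 v D.w • D.w := by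
  obtain ⟨x, y, z, rfl⟩ := exists_eq_combination_of_det_ne_zero D.det_pos.ne' v
  have := D.B3_wp_wm_ne_zero
  simp only [B3_add_left, B3_smul_left, D.B3_wp_wp, D.B3_wm_wm, D.B3_wp_w, D.B3_wm_w, D.B3_w_w,
    B3_comm D.wm D.wp, B3_comm D.w D.wp, B3_comm D.w D.wm]
  congr 2 <;> congr 1 <;> field_simp <;> ring

lemma eq_zero_of_B3_eq_zero {v : V 3} (hv : B3 v v = 0) (hp : B3 v D.wp = 0)
    (hm : B3 v D.wm = 0) : v = 0 := by
  have hrepr := D.repr v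
  simp only [hp, hm, zero_div, zero_smul, zero_add] at hrepr
  rw [hrepr, B3_smul_left, B3_smul_right, D.B3_w_w, mul_one] at hv
  rw [hrepr, mul_self_eq_zero.mp hv, zero_smul]

lemma B3_linear_pow_wm (m : ℕ) (v : V 3) :
    B3 ((D.f ^ m).linear v) D.wm = D.l ^ m * B3 v D.wm := by
  induction m generalizing v with
  | zero => rw [pow_zero, pow_zero, one_mul]; rfl
  | succ m ih =>
    change B3 ((D.f ^ m).linear (D.f.linear v)) D.wm = _
    have h := mul_B3_map_of_apply_eq_smul D.isometry D.map_wm v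
    rw [ih, ← h, pow_succ]
    field_simp [D.l_pos.ne']

lemma linear_pow_wp (m : ℕ) : (D.f ^ m).linear D.wp = D.l ^ m • D.wp :=
  linear_pow_apply_of_apply_eq_smul D.map_wp m

lemma linear_pow_wm (m : ℕ) : (D.f ^ m).linear D.wm = D.l⁻¹ ^ m • D.wm :=
  linear_pow_apply_of_apply_eq_smul D.map_wm m

lemma linear_pow_w (m : ℕ) : (D.f ^ m).linear D.w = D.w := by
  simpa using linear_pow_apply_of_apply_eq_smul (c := 1) (by rw [D.map_w, one_smul]) m

lemma exists_apply_eq_add_margulis_smul : ∃ p, D.f p = p + D.margulis • D.w := by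
  set a := B3 (D.f 0) D.wm / B3 D.wp D.wm
  set b := B3 (D.f 0) D.wp / B3 D.wp D.wm
  have h0 : D.f 0 = a • D.wp + b • D.wm + D.margulis • D.w := D.repr (D.f 0)
  have hl : D.l - 1 ≠ 0 := sub_ne_zero.mpr D.one_lt_l.ne'
  refine ⟨(a / (1 - D.l)) • D.wp + (D.l * b / (D.l - 1)) • D.wm, ?_⟩
  rw [← zero_add (_ + _), affine_apply_add, zero_add, h0, map_add, map_smul, map_smul, D.map_wp,
    D.map_wm]
  have : 1 - D.l ≠ 0 := by rw [← neg_sub]; exact neg_ne_zero.mpr hl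
  have := D.l_pos.ne'
  match_scalars <;> field_simp <;> ring

lemma pow_apply_add {p : V 3} (hp : D.f p = p + D.margulis • D.w) (m : ℕ) (v : V 3) :
    (D.f ^ m) (p + v) = p + (D.f ^ m).linear v + (m * D.margulis) • D.w := by
  induction m generalizing v with
  | zero => rw [pow_zero, Nat.cast_zero, zero_mul, zero_smul, add_zero]; rfl
  | succ m ih =>
    change (D.f ^ m) (D.f (p + v)) = p + (D.f ^ m).linear (D.f.linear v) + _
    rw [affine_apply_add, hp, add_assoc, ih, map_add, map_smul, D.linear_pow_w]
    push_cast
    module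

lemma pow_apply_add_of_B3_wm_eq_zero {p : V 3} (hp : D.f p = p + D.margulis • D.w) (m : ℕ)
    {z : V 3} (hz : B3 z D.wm = 0) :
    (D.f ^ m) (p + z) = p + (D.l⁻¹ ^ m * (B3 z D.wp / B3 D.wp D.wm)) • D.wm
      + (B3 z D.w + m * D.margulis) • D.w := by
  have hrepr : z = (B3 z D.wp / B3 D.wp D.wm) • D.wm + B3 z D.w • D.w := by
    simpa [hz] using D.repr z
  rw [D.pow_apply_add hp]
  conv_lhs => rw [hrepr, map_add, map_smul, map_smul, D.linear_pow_wm, D.linear_pow_w]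
  module

def inv : HyperbolicAffine where
  f := D.f⁻¹
  l := D.l
  wp := D.wm
  wm := D.wp
  w := -D.w
  one_lt_l := D.one_lt_l
  isometry u v := by
    rw [← D.isometry, AffineEquiv.inv_def, AffineEquiv.linear_symm, LinearEquiv.apply_symm_apply,
      LinearEquiv.apply_symm_apply]
  map_wp := by
    rw [AffineEquiv.inv_def, AffineEquiv.linear_symm, LinearEquiv.symm_apply_eq, map_smul,
      D.map_wm, smul_smul, mul_inv_cancel₀ D.l_pos.ne', one_smul]
  map_wm := by
    rw [AffineEquiv.inv_def, AffineEquiv.linear_symm, LinearEquiv.symm_apply_eq, map_smul,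
      D.map_wp, smul_smul, inv_mul_cancel₀ D.l_pos.ne', one_smul]
  map_w := by
    rw [AffineEquiv.inv_def, AffineEquiv.linear_symm, LinearEquiv.symm_apply_eq, map_neg, D.map_w]
  B3_w_w := by rw [B3_neg_right, B3_comm, B3_neg_right, neg_neg, D.B3_w_w]
  B3_wp_wm_neg := by rw [B3_comm]; exact D.B3_wp_wm_neg
  det_pos := by
    have := D.det_pos
    rw [det_colMatrix] at this ⊢
    simp only [Pi.neg_apply]
    linarith

lemma margulis_inv : D.inv.margulis = D.margulis := by
  have h := affine_apply_add D.f 0 (D.f⁻¹ 0)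
  rw [zero_add, show D.f (D.f⁻¹ 0) = 0 from D.f.apply_symm_apply 0] at h
  have hiso := D.isometry (D.f⁻¹ 0) D.w
  rw [D.map_w] at hiso
  have hB := congrArg (B3 · D.w) h
  simp only [B3_zero_left, B3_add_left, hiso] at hB
  change B3 (D.f⁻¹ 0) (-D.w) = B3 (D.f 0) D.w
  rw [B3_neg_right]
  linarith

lemma lorentzCross_wm_w :
    lorentzCross D.wm D.w = ((colMatrix D.wp D.wm D.w).det / B3 D.wp D.wm) • D.wm := by
  rw [D.repr (lorentzCross D.wm D.w)]
  simp only [B3_lorentzCross]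
  have h₁ : (colMatrix D.wm D.w D.wm).det = 0 := by rw [det_colMatrix]; ring
  have h₂ : (colMatrix D.wm D.w D.wp).det = (colMatrix D.wp D.wm D.w).det := by
    rw [det_colMatrix, det_colMatrix]; ring
  have h₃ : (colMatrix D.wm D.w D.w).det = 0 := by rw [det_colMatrix]; ring
  rw [h₁, h₂, h₃]
  simp

lemma lorentzCross_wp_w :
    lorentzCross D.wp D.w = -((colMatrix D.wp D.wm D.w).det / B3 D.wp D.wm) • D.wp := by
  rw [D.repr (lorentzCross D.wp D.w)]
  simp only [B3_lorentzCross]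
  have h₁ : (colMatrix D.wp D.w D.wm).det = -(colMatrix D.wp D.wm D.w).det := by
    rw [det_colMatrix, det_colMatrix]; ring
  have h₂ : (colMatrix D.wp D.w D.wp).det = 0 := by rw [det_colMatrix]; ring
  have h₃ : (colMatrix D.wp D.w D.w).det = 0 := by rw [det_colMatrix]; ring
  rw [h₁, h₂, h₃, neg_div]
  simp

/-- The orientation conditions are used here: by the Gram identity for `lorentzCross` this number
is `(det_E / B3 E.wp E.wm) * (det_D / B3 D.wp D.wm)`, a product of two negative numbers. -/
lemma B3_sub_smul_wp_w_pos (D E : HyperbolicAffine) (ht : B3 E.wp D.wm ≠ 0) :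
    0 < B3 (E.w - (B3 E.w D.wm / B3 E.wp D.wm) • E.wp) D.w := by
  have hgram := B3_lorentzCross_lorentzCross E.wp E.w D.wm D.w
  rw [E.lorentzCross_wp_w, D.lorentzCross_wm_w, B3_smul_left, B3_smul_right] at hgram
  have key : B3 (E.w - (B3 E.w D.wm / B3 E.wp D.wm) • E.wp) D.w
      = (colMatrix E.wp E.wm E.w).det / B3 E.wp E.wm
        * ((colMatrix D.wp D.wm D.w).det / B3 D.wp D.wm) := by
    rw [B3_sub_left, B3_smul_left]
    field_simp
    linear_combination hgram
  rw [key]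
  exact mul_pos_of_neg_of_neg (div_neg_of_pos_of_neg E.det_pos E.B3_wp_wm_neg)
    (div_neg_of_pos_of_neg D.det_pos D.B3_wp_wm_neg)

/-- With `m k * margulis ≈ k * |B3 u w|` the translation of `f ^ m k` along `w` cancels the drift
`k • u`, and the contraction by `l⁻¹ ^ m k` beats the linear growth of the `wm`-component. -/
lemma exists_monotone_pow_apply_bounded (hα : 0 < D.margulis) {p : V 3}
    (hp : D.f p = p + D.margulis • D.w) {z₀ u : V 3} (hz₀ : B3 z₀ D.wm = 0)
    (hu : B3 u D.wm = 0) (huw : B3 u D.w < 0) :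
    ∃ m : ℕ → ℕ, Monotone m ∧ ∃ C, ∀ k : ℕ, ‖(D.f ^ m k) (p + (z₀ + (k : ℝ) • u))‖ ≤ C := by
  set α := D.margulis
  set e := B3 z₀ D.w
  set d := -B3 u D.w
  have hd : 0 < d := neg_pos.mpr huw
  set a := B3 z₀ D.wp / B3 D.wp D.wm
  set b := B3 u D.wp / B3 D.wp D.wm
  refine ⟨fun k => ⌈(|e| + k * d) / α⌉₊, fun k k' hk => Nat.ceil_mono (by gcongr), ?_⟩
  refine ⟨‖p‖ + (|a| + α / d * |b|) * (D.l / (D.l - 1)) * ‖D.wm‖ + (2 * |e| + α) * ‖D.w‖,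
    fun k => ?_⟩
  set m := ⌈(|e| + k * d) / α⌉₊
  obtain ⟨hm₁, hm₂⟩ := le_ceil_div_mul_lt hα (by positivity : 0 ≤ |e| + k * d)
  rw [D.pow_apply_add_of_B3_wm_eq_zero hp m (by simp [hz₀, hu])]
  have hwm : |D.l⁻¹ ^ m * (B3 (z₀ + (k : ℝ) • u) D.wp / B3 D.wp D.wm)|
      ≤ (|a| + α / d * |b|) * (D.l / (D.l - 1)) := by
    have hkm : (k : ℝ) ≤ α / d * m := by
      rw [div_mul_eq_mul_div, le_div_iff₀ hd]; nlinarith [abs_nonneg e]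
    rw [B3_add_left, B3_smul_left, add_div, mul_div_assoc, abs_mul, inv_pow,
      abs_of_pos (inv_pos.mpr (pow_pos D.l_pos m)), inv_mul_eq_div]
    exact abs_add_mul_div_pow_le D.one_lt_l (by positivity) hkm
  have hw : |B3 (z₀ + (k : ℝ) • u) D.w + m * α| ≤ 2 * |e| + α := by
    rw [B3_add_left, B3_smul_left, abs_le]
    constructor <;> nlinarith [abs_nonneg e, le_abs_self e, neg_abs_le e]
  calc _ ≤ ‖p‖ + ‖(D.l⁻¹ ^ m * (B3 (z₀ + (k : ℝ) • u) D.wp / B3 D.wp D.wm)) • D.wm‖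
        + ‖(B3 (z₀ + (k : ℝ) • u) D.w + m * α) • D.w‖ := norm_add₃_le
    _ ≤ _ := by
      rw [norm_smul, norm_smul, Real.norm_eq_abs, Real.norm_eq_abs]
      gcongr

lemma pow_mul_pow_ne_one (D E : HyperbolicAffine) (ht : B3 E.wp D.wm ≠ 0) (j : ℕ) {δ : ℕ}
    (hδ : δ ≠ 0) : D.f ^ j * E.f ^ δ ≠ 1 := by
  intro h
  have hlin : (D.f ^ j).linear ((E.f ^ δ).linear E.wp) = E.wp := by
    change (D.f ^ j * E.f ^ δ).linear E.wp = E.wp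
    rw [h]
    rfl
  have hB := congrArg (B3 · D.wm) hlin
  simp only [E.linear_pow_wp, map_smul, B3_smul_left, D.B3_linear_pow_wm] at hB
  have hgt : 1 < E.l ^ δ * D.l ^ j :=
    one_lt_mul_of_lt_of_le (one_lt_pow₀ E.one_lt_l hδ) (one_le_pow₀ D.one_lt_l.le)
  have : (E.l ^ δ * D.l ^ j - 1) * B3 E.wp D.wm = 0 := by linear_combination hB
  exact ht ((mul_eq_zero.mp this).resolve_left (sub_ne_zero.mpr hgt.ne'))

end HyperbolicAffine

open HyperbolicAffine

variable (S : Subgroup (Aff 3))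

lemma not_properlyDisc_of_margulis_eq_zero (D : HyperbolicAffine) (hD : D.f ∈ S)
    (hα : D.margulis = 0) : ¬ ProperlyDisc (fun (γ : S) (x : V 3) => (γ : Aff 3) x) := by
  obtain ⟨p, hp⟩ := D.exists_apply_eq_add_margulis_smul
  have hfix : ∀ n : ℕ, (D.f ^ n) p = p := fun n => by
    simpa [hα] using D.pow_apply_add hp n 0
  have hinj : Function.Injective fun n : ℕ => D.f ^ n := fun m n h => by
    have h' := congrArg (fun g : Aff 3 => g.linear D.wp) h
    simp only [linear_pow_wp] at h'
    exact pow_right_injective₀ D.l_pos D.one_lt_l.ne' (smul_left_injective ℝ D.wp_ne_zero h')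
  exact not_properlyDisc_of_injective_of_bounded S (fun n => pow_mem hD n) hinj (fun _ => p)
    (fun _ => le_rfl) (fun n => (congrArg norm (hfix n)).le)

lemma not_properlyDisc_of_margulis_pos_of_neg_of_B3_ne_zero (D E : HyperbolicAffine)
    (hD : D.f ∈ S) (hE : E.f ∈ S) (hαD : 0 < D.margulis) (hαE : E.margulis < 0)
    (ht : B3 E.wp D.wm ≠ 0) : ¬ ProperlyDisc (fun (γ : S) (x : V 3) => (γ : Aff 3) x) := by
  obtain ⟨p, hp⟩ := D.exists_apply_eq_add_margulis_smul
  obtain ⟨q, hq⟩ := E.exists_apply_eq_add_margulis_smul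
  set proj : V 3 → V 3 := fun v => v - (B3 v D.wm / B3 E.wp D.wm) • E.wp
  have hproj : ∀ v, B3 (proj v) D.wm = 0 := fun v => by
    simp only [proj, B3_sub_left, B3_smul_left]
    field_simp
    ring
  obtain ⟨m, hm, C, hC⟩ := D.exists_monotone_pow_apply_bounded hαD hp (hproj (q - p))
    (u := E.margulis • proj E.w) (by rw [B3_smul_left, hproj, mul_zero])
    (by rw [B3_smul_left]; exact mul_neg_of_neg_of_pos hαE (B3_sub_smul_wp_w_pos D E ht))
  set a := -(B3 (q - p) D.wm / B3 E.wp D.wm)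
  set b := -(E.margulis * (B3 E.w D.wm / B3 E.wp D.wm))
  have hEk : ∀ k : ℕ, (E.f ^ k) (q + ((a + k * b) / E.l ^ k) • E.wp)
      = p + (proj (q - p) + (k : ℝ) • E.margulis • proj E.w) := fun k => by
    rw [E.pow_apply_add hq, map_smul, E.linear_pow_wp, smul_smul,
      div_mul_cancel₀ _ (pow_ne_zero k E.l_pos.ne')]
    module
  refine not_properlyDisc_of_injective_of_bounded S (c := fun k => D.f ^ m k * E.f ^ k)
    (fun k => mul_mem (pow_mem hD _) (pow_mem hE _))
    (injective_pow_mul_pow (fun j δ hδ => pow_mul_pow_ne_one D E ht j hδ) hm)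
    (fun k => q + ((a + k * b) / E.l ^ k) • E.wp)
    (R₁ := ‖q‖ + (|a| + 1 * |b|) * (E.l / (E.l - 1)) * ‖E.wp‖) (fun k => ?_)
    (fun k => by simpa only [AffineEquiv.coe_mul, Function.comp_apply, hEk] using hC k)
  refine (norm_add_le _ _).trans ?_
  rw [norm_smul, Real.norm_eq_abs, abs_div, abs_of_pos (pow_pos E.l_pos k)]
  gcongr
  exact abs_add_mul_div_pow_le E.one_lt_l zero_le_one (by rw [one_mul])

lemma not_properlyDisc_of_margulis_pos_of_neg (D E : HyperbolicAffine) (hD : D.f ∈ S)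
    (hE : E.f ∈ S) (hαD : 0 < D.margulis) (hαE : E.margulis < 0) :
    ¬ ProperlyDisc (fun (γ : S) (x : V 3) => (γ : Aff 3) x) := by
  by_cases ht : B3 E.wp D.wm = 0
  · -- the null vector `E.wp` cannot be orthogonal to `D.wp` as well, so `D⁻¹` is transverse to `E`
    have ht' : B3 E.wp D.inv.wm ≠ 0 := fun h =>
      E.wp_ne_zero (D.eq_zero_of_B3_eq_zero E.B3_wp_wp h ht)
    exact not_properlyDisc_of_margulis_pos_of_neg_of_B3_ne_zero S D.inv E (inv_mem hD) hE
      (D.margulis_inv ▸ hαD) hαE ht'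
  · exact not_properlyDisc_of_margulis_pos_of_neg_of_B3_ne_zero S D E hD hE hαD hαE ht

lemma not_properlyDisc_of_margulis_mul_nonpos (D E : HyperbolicAffine) (hD : D.f ∈ S)
    (hE : E.f ∈ S) (h : D.margulis * E.margulis ≤ 0) :
    ¬ ProperlyDisc (fun (γ : S) (x : V 3) => (γ : Aff 3) x) := by
  rcases h.lt_or_eq with h | h
  · rcases mul_neg_iff.mp h with ⟨hαD, hαE⟩ | ⟨hαD, hαE⟩
    · exact not_properlyDisc_of_margulis_pos_of_neg S D E hD hE hαD hαE
    · exact not_properlyDisc_of_margulis_pos_of_neg S E D hE hD hαE hαD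
  · rcases mul_eq_zero.mp h with h | h
    · exact not_properlyDisc_of_margulis_eq_zero S D hD h
    · exact not_properlyDisc_of_margulis_eq_zero S E hE h

end OppositeSign

open OppositeSign

/-- (Margulis's Opposite Sign Lemma.) If `g, h` are affine transformations of `ℝ³` with
hyperbolic Lorentzian linear parts and Margulis invariants of opposite (or zero) sign, then
the group they generate does not act properly discontinuously on `ℝ³`. -/
theorem opposite_sign_lemma
    (g h : Aff 3) (lg lh : ℝ) (hlg : 1 < lg) (hlh : 1 < lh)
    (wgp wgm wg whp whm wh : V 3)
    -- the linear parts preserve the Lorentzian form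
    (hBg : ∀ v w : V 3, B3 (g.linear v) (g.linear w) = B3 v w)
    (hBh : ∀ v w : V 3, B3 (h.linear v) (h.linear w) = B3 v w)
    -- hyperbolicity data for g
    (hgp : g.linear wgp = lg • wgp)
    (hgm : g.linear wgm = lg⁻¹ • wgm)
    (hgw : g.linear wg = wg)
    (hgunit : B3 wg wg = 1)
    (hgpm : B3 wgp wgm < 0)
    (hgdet : 0 < (colMatrix wgp wgm wg).det)
    -- hyperbolicity data for h
    (hhp : h.linear whp = lh • whp)
    (hhm : h.linear whm = lh⁻¹ • whm)
    (hhw : h.linear wh = wh)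
    (hhunit : B3 wh wh = 1)
    (hhpm : B3 whp whm < 0)
    (hhdet : 0 < (colMatrix whp whm wh).det)
    -- the Margulis invariants α(g) = B(g(0), w_g), α(h) = B(h(0), w_h) have opposite signs
    (hsign : B3 (g 0) wg * B3 (h 0) wh ≤ 0) :
    ¬ ProperlyDisc
        (fun (γ : Subgroup.closure ({g, h} : Set (Aff 3))) (x : V 3) => (γ : Aff 3) x) := by
  let Dg : HyperbolicAffine := ⟨g, lg, wgp, wgm, wg, hlg, hBg, hgp, hgm, hgw, hgunit, hgpm, hgdet⟩
  let Dh : HyperbolicAffine := ⟨h, lh, whp, whm, wh, hlh, hBh, hhp, hhm, hhw, hhunit, hhpm, hhdet⟩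
  exact not_properlyDisc_of_margulis_mul_nonpos _ Dg Dh
    (Subgroup.subset_closure (Set.mem_insert g {h}))
    (Subgroup.subset_closure (Set.mem_insert_of_mem g rfl)) hsign
end
end

section
/- (Key direction of the Guéritaud–Kassel properness criterion, as proved in the paper.) Let Γ be a group and let ρ₀, ρ₁ : Γ → SL(2,ℝ) be group homomorphisms. Suppose the action of Γ on the hyperbolic plane ℍ (the upper half-plane with its hyperbolic metric) via ρ₀ and Möbius transformations is properly discontinuous, and suppose there exists a map f : ℍ → ℍ which is Lipschitz with some Lipschitz constant K < 1 and is (ρ₀,ρ₁)-equivariant, i.e. f(ρ₀(γ)·z) = ρ₁(γ)·f(z) for all γ ∈ Γ and z ∈ ℍ. Then the action of Γ on the topological group SL(2,ℝ) defined by γ · h := ρ₁(γ) h ρ₀(γ)⁻¹ is properly discontinuous. -/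
noncomputable section

open Matrix UpperHalfPlane

/-- `SL(2,ℝ)` with its standard matrix topology. -/
instance : TopologicalSpace (Matrix.SpecialLinearGroup (Fin 2) ℝ) :=
  TopologicalSpace.induced (fun g => (g : Matrix (Fin 2) (Fin 2) ℝ)) inferInstance

lemma cont_entry (i j : Fin 2) :
    Continuous (fun g : Matrix.SpecialLinearGroup (Fin 2) ℝ =>
      (g : Matrix (Fin 2) (Fin 2) ℝ) i j) := by
  exact continuous_induced_dom.matrix_elem i j

lemma denom_ne_zero' (g : Matrix.SpecialLinearGroup (Fin 2) ℝ) (w : ℍ) :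
    ((g 1 0 : ℂ) * w + (g 1 1 : ℂ)) ≠ 0 := by
  intro h
  have him := congrArg Complex.im h
  simp [Complex.add_im, Complex.mul_im] at him
  rcases him with hc | him
  · rw [hc] at h
    simp at h
    have hdet := g.2
    rw [Matrix.det_fin_two, hc, h] at hdet
    simp at hdet
  · have := w.im_pos; linarith

lemma cont_smul (w : ℍ) : Continuous (fun g : Matrix.SpecialLinearGroup (Fin 2) ℝ => g • w) := by
  rw [UpperHalfPlane.isEmbedding_coe.continuous_iff]
  have : (UpperHalfPlane.coe ∘ fun g : Matrix.SpecialLinearGroup (Fin 2) ℝ => g • w) =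
      fun g => ((g 0 0 : ℂ) * w + (g 0 1 : ℂ)) / ((g 1 0 : ℂ) * w + (g 1 1 : ℂ)) := by
    funext g
    show ((g • w : ℍ) : ℂ) = _
    rw [UpperHalfPlane.specialLinearGroup_apply]
    simp
  rw [this]
  apply Continuous.div
  · exact ((Complex.continuous_ofReal.comp (cont_entry 0 0)).mul continuous_const).add
      (Complex.continuous_ofReal.comp (cont_entry 0 1))
  · exact ((Complex.continuous_ofReal.comp (cont_entry 1 0)).mul continuous_const).add
      (Complex.continuous_ofReal.comp (cont_entry 1 1))
  · exact fun g => denom_ne_zero' g w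

lemma dist_smul_left' (l : Matrix.SpecialLinearGroup (Fin 2) ℝ) (x y : ℍ) :
    dist (l • x) y = dist x (l⁻¹ • y) := by
  conv_lhs => rw [← smul_inv_smul l y, dist_smul]

/-- (Guéritaud–Kassel, key direction of the properness criterion.) If `Γ` acts properly
discontinuously on `ℍ` via `ρ₀`, and there is a `(ρ₀,ρ₁)`-equivariant Lipschitz map
`f : ℍ → ℍ` with Lipschitz constant `< 1`, then the action `γ · h = ρ₁(γ) h ρ₀(γ)⁻¹` of `Γ`
on `SL(2,ℝ)` is properly discontinuous. -/
theorem gueritaud_kassel_contracting_implies_proper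
    {Γ : Type*} [Group Γ]
    (ρ₀ ρ₁ : Γ →* Matrix.SpecialLinearGroup (Fin 2) ℝ)
    (hproper : ProperlyDisc (fun (γ : Γ) (z : ℍ) => ρ₀ γ • z))
    (f : ℍ → ℍ) (K : NNReal) (hK : K < 1) (hf : LipschitzWith K f)
    (hequiv : ∀ (γ : Γ) (z : ℍ), f (ρ₀ γ • z) = ρ₁ γ • f z) :
    ProperlyDisc (fun (γ : Γ) (h : Matrix.SpecialLinearGroup (Fin 2) ℝ) =>
      ρ₁ γ * h * (ρ₀ γ)⁻¹) := by
  intro Kc Lc hKc hLc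
  set z₀ : ℍ := UpperHalfPlane.I with hz₀
  set p : ℍ := f z₀ with hp
  obtain ⟨CK, hCK⟩ : ∃ C, ∀ h ∈ Kc, dist p (h • z₀) ≤ C := by
    obtain ⟨C, hC⟩ := (hKc.bddAbove_image
      ((continuous_const.dist (cont_smul z₀)).continuousOn))
    exact ⟨C, fun h hh => hC (Set.mem_image_of_mem _ hh)⟩
  obtain ⟨CL, hCL⟩ : ∃ C, ∀ l ∈ Lc, dist (l • p) p ≤ C := by
    obtain ⟨C, hC⟩ := (hLc.bddAbove_image
      (((cont_smul p).dist continuous_const).continuousOn))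
    exact ⟨C, fun l hl => hC (Set.mem_image_of_mem _ hl)⟩
  have hK1 : (0:ℝ) < 1 - (K:ℝ) := by
    have : (K:ℝ) < 1 := hK
    linarith
  set R : ℝ := (CK + CL + dist p z₀) / (1 - (K:ℝ)) with hR
  apply Set.Finite.subset
    (hproper {z₀} (Metric.closedBall z₀ R) isCompact_singleton (isCompact_closedBall z₀ R))
  rintro γ ⟨x, ⟨h, hh, rfl⟩, hxL⟩
  set a := ρ₀ γ with ha
  set b := ρ₁ γ with hb
  set l := b * h * a⁻¹ with hl
  set t := dist (a • z₀) z₀ with ht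
  have hlb : b = l * (a * h⁻¹) := by rw [hl]; group
  have hLip : dist (b • p) p ≤ (K:ℝ) * t := by
    have he : b • p = f (a • z₀) := (hequiv γ z₀).symm
    rw [he, hp]
    exact hf.dist_le_mul _ _
  have hmid : dist (b • p) p = dist ((a * h⁻¹) • p) (l⁻¹ • p) := by
    rw [hlb, mul_smul, dist_smul_left']
  have h1 : dist (a • z₀) ((a * h⁻¹) • p) ≤ CK := by
    rw [mul_smul, dist_smul, ← dist_smul h, smul_inv_smul, dist_comm]
    exact hCK h hh
  have h2 : dist (l⁻¹ • p) z₀ ≤ CL + dist p z₀ := by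
    have : dist (l⁻¹ • p) p ≤ CL := by
      rw [← dist_smul l, smul_inv_smul, dist_comm]
      exact hCL l hxL
    calc dist (l⁻¹ • p) z₀ ≤ dist (l⁻¹ • p) p + dist p z₀ := dist_triangle _ _ _
      _ ≤ CL + dist p z₀ := by linarith
  have htri : t ≤ CK + (K:ℝ) * t + (CL + dist p z₀) := by
    calc t ≤ dist (a • z₀) ((a * h⁻¹) • p) + dist ((a * h⁻¹) • p) (l⁻¹ • p)
            + dist (l⁻¹ • p) z₀ := dist_triangle4 _ _ _ _
      _ ≤ CK + (K:ℝ) * t + (CL + dist p z₀) := by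
          rw [← hmid]; gcongr
  have htR : t ≤ R := by
    rw [hR, le_div_iff₀ hK1]
    linarith
  exact ⟨a • z₀, ⟨z₀, rfl, rfl⟩, Metric.mem_closedBall.mpr htR⟩
end
end

section
/- (Schottky's ping-pong in the hyperboloid model.) Let B be the Lorentzian bilinear form on ℝ³ and H = {v ∈ ℝ³ : B(v,v) = −1, v₃ > 0} the hyperboloid model of the hyperbolic plane. For a spacelike vector w (i.e. B(w,w) > 0), let H̄_w = {v ∈ H : B(v,w) ≥ 0}. Let A₁, A₂ ∈ GL(3,ℝ) preserve B and map H to itself, and let w₁, w₂ be spacelike vectors. If the four sets H̄_{−w₁}, H̄_{A₁w₁}, H̄_{−w₂}, H̄_{A₂w₂} are pairwise disjoint, then the homomorphism from the free group on two generators to GL(3,ℝ) sending the generators to A₁ and A₂ is injective (so A₁ and A₂ generate a free group of rank 2), and the subgroup generated by A₁ and A₂ is a discrete subgroup of GL(3,ℝ). -/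
/-!
Ping-pong: `A_i` maps `H ∖ H̄_{-w_i}` into `H̄_{A_i w_i}` and `A_i⁻¹` maps `H ∖ H̄_{A_i w_i}` into
`H̄_{-w_i}`. Since `H` is connected and the four half-planes are closed, pairwise disjoint and not
all empty, some `x₀ ∈ H` lies in none of them. Induction on a reduced word shows that the word
maps `x₀` into the half-plane of its first letter, so every nontrivial element moves `x₀` into
the closed union `C` of the half-planes. This gives injectivity, and `{g | g • x₀ ∉ C}` is a
neighbourhood of `1` meeting the group only in `1`.
-/

noncomputable section

/-- The upper sheet of the hyperboloid `B(v,v) = -1`, model of the hyperbolic plane. -/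
def UpperHyperboloid : Set (Fin 3 → ℝ) := {v | B3 v v = -1 ∧ 0 < v 2}

/-- The closed half-plane of the hyperboloid model determined by a spacelike vector `w`. -/
def closedHalfPlane (w : Fin 3 → ℝ) : Set (Fin 3 → ℝ) :=
  {v ∈ UpperHyperboloid | 0 ≤ B3 v w}

open Function

theorem Subgroup.discreteTopology_of_forall_ne_one_smul_mem {G α : Type*} [Group G]
    [TopologicalSpace G] [IsTopologicalGroup G] [MulAction G α] [TopologicalSpace α]
    (Γ : Subgroup G) {x : α} (hcont : Continuous fun g : G => g • x) {C : Set α}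
    (hC : IsClosed C) (hx : x ∉ C) (hΓ : ∀ γ ∈ Γ, γ ≠ 1 → γ • x ∈ C) :
    DiscreteTopology Γ := by
  rw [discreteTopology_iff_isOpen_singleton_one]
  have : ({1} : Set Γ) = (fun γ : Γ => (γ : G) • x) ⁻¹' Cᶜ := by
    ext γ
    refine ⟨fun h => by simpa [Set.mem_singleton_iff.1 h] using hx, fun h => ?_⟩
    by_contra hγ
    exact h (hΓ γ γ.2 (by simpa using hγ))
  rw [this]
  exact hC.isOpen_compl.preimage (hcont.comp continuous_subtype_val)

theorem IsPreconnected.exists_forall_notMem {ι α : Type*} [TopologicalSpace α] [Finite ι]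
    {S : Set α} (hS : IsPreconnected S) {D : ι → Set α} (hDc : ∀ i, IsClosed (D i))
    (hDS : ∀ i, D i ⊆ S) (hD : Pairwise (Disjoint on D)) {i j : ι} (hij : i ≠ j)
    (hi : (D i).Nonempty) (hj : (D j).Nonempty) : ∃ x ∈ S, ∀ k, x ∉ D k := by
  by_contra! hcover
  have hrest : IsClosed (⋃ k ∈ ({i}ᶜ : Set ι), D k) :=
    (Set.toFinite _).isClosed_biUnion fun k _ => hDc k
  have hsplit : S ⊆ D i ∪ ⋃ k ∈ ({i}ᶜ : Set ι), D k := by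
    intro x hx
    obtain ⟨k, hk⟩ := hcover x hx
    by_cases hki : k = i
    · exact Or.inl (hki ▸ hk)
    · exact Or.inr (Set.mem_biUnion hki hk)
  have hsep : S ∩ (D i ∩ ⋃ k ∈ ({i}ᶜ : Set ι), D k) = ∅ := by
    ext x
    simp only [Set.mem_inter_iff, Set.mem_iUnion, Set.mem_compl_singleton_iff,
      Set.mem_empty_iff_false, iff_false]
    rintro ⟨-, hxi, k, hki, hxk⟩
    exact (hD (Ne.symm hki)).le_bot ⟨hxi, hxk⟩
  rcases isPreconnected_iff_subset_of_disjoint_closed.1 hS _ _ (hDc i) hrest hsplit hsep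
    with hSi | hSrest
  · obtain ⟨y, hy⟩ := hj
    exact (hD hij.symm).le_bot ⟨hy, hSi (hDS j hy)⟩
  · obtain ⟨y, hy⟩ := hi
    obtain ⟨k, hki, hyk⟩ := Set.mem_iUnion₂.1 (hSrest (hDS i hy))
    exact (hD (Ne.symm hki)).le_bot ⟨hy, hyk⟩

namespace FreeGroup

/-- `D (i, true)` is the set owned by the letter `of i`, `D (i, false)` the one owned by its
inverse. -/
structure IsPingPong {ι G α : Type*} [Group G] [MulAction G α] (φ : FreeGroup ι →* G)
    (S : Set α) (D : ι × Bool → Set α) : Prop where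
  subset : ∀ p, D p ⊆ S
  pairwise_disjoint : Pairwise (Disjoint on D)
  smul_mem : ∀ p, ∀ x ∈ S, x ∉ D (p.1, !p.2) → φ (mk [p]) • x ∈ D p

namespace IsPingPong

variable {ι G α : Type*} [Group G] [MulAction G α] {φ : FreeGroup ι →* G}
  {S : Set α} {D : ι × Bool → Set α} {x : α}

theorem smul_mem_of_isReduced_cons (h : IsPingPong φ S D) (hxS : x ∈ S) (hx : ∀ p, x ∉ D p) :
    ∀ {p : ι × Bool} {L : List (ι × Bool)}, IsReduced (p :: L) → φ (FreeGroup.mk (p :: L)) • x ∈ D p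
  | p, [], _ => h.smul_mem p x hxS (hx _)
  | p, q :: L, hL => by
    obtain ⟨hpq, hqL⟩ := isReduced_cons_cons.1 hL
    have hy := h.smul_mem_of_isReduced_cons hxS hx hqL
    have hne : (p.1, !p.2) ≠ q := by
      rintro rfl
      simp at hpq
    rw [← List.singleton_append, ← mul_mk, _root_.map_mul, mul_smul]
    exact h.smul_mem p _ (h.subset q hy) fun h' => (h.pairwise_disjoint hne).le_bot ⟨h', hy⟩

variable [DecidableEq ι]

theorem smul_mem_iUnion_of_ne_one (h : IsPingPong φ S D) (hxS : x ∈ S) (hx : ∀ p, x ∉ D p)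
    {g : FreeGroup ι} (hg : g ≠ 1) : φ g • x ∈ ⋃ p, D p := by
  obtain ⟨p, L, hgL⟩ := List.exists_cons_of_ne_nil (mt toWord_eq_nil_iff.1 hg)
  rw [← mk_toWord (x := g), hgL]
  exact Set.mem_iUnion_of_mem p (h.smul_mem_of_isReduced_cons hxS hx (hgL ▸ isReduced_toWord))

theorem injective (h : IsPingPong φ S D) (hxS : x ∈ S) (hx : ∀ p, x ∉ D p) :
    Injective φ := by
  refine (injective_iff_map_eq_one φ).2 fun g hg => ?_
  by_contra hg1
  have := h.smul_mem_iUnion_of_ne_one hxS hx hg1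
  rw [hg, one_smul] at this
  obtain ⟨p, hp⟩ := Set.mem_iUnion.1 this
  exact hx p hp

theorem discreteTopology_range [Finite ι] [TopologicalSpace G] [IsTopologicalGroup G]
    [TopologicalSpace α] (h : IsPingPong φ S D) (hDc : ∀ p, IsClosed (D p)) (hxS : x ∈ S)
    (hx : ∀ p, x ∉ D p) (hcont : Continuous fun g : G => g • x) :
    DiscreteTopology φ.range := by
  refine φ.range.discreteTopology_of_forall_ne_one_smul_mem hcont (isClosed_iUnion_of_finite hDc)
    (by simpa using hx) ?_
  rintro _ ⟨g, rfl⟩ hg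
  exact h.smul_mem_iUnion_of_ne_one hxS hx fun h1 => hg (h1 ▸ _root_.map_one φ)

end IsPingPong

end FreeGroup

theorem B3_neg_left (v w : Fin 3 → ℝ) : B3 (-v) w = -B3 v w := by
  simp only [B3, Pi.neg_apply]; ring

theorem B3_neg_right (v w : Fin 3 → ℝ) : B3 v (-w) = -B3 v w := by
  simp only [B3, Pi.neg_apply]; ring

theorem apply_two_ne_zero_of_B3_self_eq {v : Fin 3 → ℝ} (hv : B3 v v = -1) : v 2 ≠ 0 := by
  intro h0
  simp only [B3, h0] at hv
  nlinarith [sq_nonneg (v 0), sq_nonneg (v 1)]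

theorem isClosed_upperHyperboloid : IsClosed UpperHyperboloid := by
  have : UpperHyperboloid = {v | B3 v v = -1} ∩ {v | 0 ≤ v 2} := by
    ext v
    exact ⟨fun h => ⟨h.1, h.2.le⟩,
      fun ⟨h, h2⟩ => ⟨h, h2.lt_of_ne (apply_two_ne_zero_of_B3_self_eq h).symm⟩⟩
  rw [this]
  exact (isClosed_eq (by unfold B3; fun_prop) continuous_const).inter
    (isClosed_le continuous_const (continuous_apply 2))

theorem isPreconnected_upperHyperboloid : IsPreconnected UpperHyperboloid := by
  have : UpperHyperboloid =
      Set.range fun p : ℝ × ℝ => ![p.1, p.2, √(1 + p.1 ^ 2 + p.2 ^ 2)] := by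
    ext v
    constructor
    · rintro ⟨hv, hv2⟩
      refine ⟨(v 0, v 1), funext fun i => ?_⟩
      have : 1 + v 0 ^ 2 + v 1 ^ 2 = v 2 ^ 2 := by simp only [B3] at hv; linarith
      fin_cases i <;> simp [this, Real.sqrt_sq hv2.le]
    · rintro ⟨⟨a, b⟩, rfl⟩
      have hpos : 0 < 1 + a ^ 2 + b ^ 2 := by positivity
      refine ⟨?_, by simpa using hpos⟩
      simp [B3, ← sq, Real.sq_sqrt hpos.le]
  rw [this]
  exact isPreconnected_range (by fun_prop)

theorem isClosed_closedHalfPlane (w : Fin 3 → ℝ) : IsClosed (closedHalfPlane w) :=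
  isClosed_upperHyperboloid.inter
    (isClosed_le continuous_const (show Continuous fun v => B3 v w by unfold B3; fun_prop))

theorem closedHalfPlane_nonempty {w : Fin 3 → ℝ} (hw : 0 < B3 w w) :
    (closedHalfPlane w).Nonempty := by
  rcases le_or_gt (w 2) 0 with hw2 | hw2
  · exact ⟨![0, 0, 1], ⟨by simp [B3], by simp⟩, by simp [B3]; linarith⟩
  -- the reflection of the apex `(0, 0, 1)` in the plane `w⊥`
  set c := 2 * w 2 / B3 w w
  have hc : c * B3 w w = 2 * w 2 := div_mul_cancel₀ _ hw.ne'
  have hc0 : 0 < c := by positivity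
  clear_value c
  simp only [B3] at hc
  refine ⟨![0, 0, 1] + c • w, ⟨?_, ?_⟩, ?_⟩
  · simp [B3]
    linear_combination c * hc
  · simp
    positivity
  · refine hw2.le.trans_eq ?_
    simp [B3]
    linear_combination -hc

structure IsHyperbolicIsometry (A : GL (Fin 3) ℝ) : Prop where
  B3_smul : ∀ v w, B3 (A • v) (A • w) = B3 v w
  smul_mem : ∀ v ∈ UpperHyperboloid, A • v ∈ UpperHyperboloid

namespace IsHyperbolicIsometry

variable {A : GL (Fin 3) ℝ}

theorem inv (hA : IsHyperbolicIsometry A) : IsHyperbolicIsometry A⁻¹ := by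
  have hB : ∀ v w, B3 (A⁻¹ • v) (A⁻¹ • w) = B3 v w := fun v w => by
    rw [← hA.B3_smul, smul_inv_smul, smul_inv_smul]
  refine ⟨hB, fun y hy => ⟨(hB y y).trans hy.1, ?_⟩⟩
  -- otherwise `-(A⁻¹ • y)` lies on the upper sheet, and `A` maps it to `-y`
  by_contra! hneg
  have hnegy := hA.smul_mem (-(A⁻¹ • y))
    ⟨by rw [B3_neg_left, B3_neg_right, neg_neg, hB, hy.1],
     by simpa using hneg.lt_of_ne (apply_two_ne_zero_of_B3_self_eq ((hB y y).trans hy.1))⟩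
  rw [smul_neg, smul_inv_smul] at hnegy
  exact lt_asymm hy.2 (neg_pos.1 hnegy.2)

theorem smul_mem_closedHalfPlane (hA : IsHyperbolicIsometry A) {v w : Fin 3 → ℝ}
    (hv : v ∈ UpperHyperboloid) (hvw : v ∉ closedHalfPlane (-w)) :
    A • v ∈ closedHalfPlane (A • w) := by
  have : B3 v (-w) < 0 := not_le.1 fun h => hvw ⟨hv, h⟩
  refine ⟨hA.smul_mem v hv, ?_⟩
  rw [hA.B3_smul]
  linarith [B3_neg_right v w]

theorem inv_smul_mem_closedHalfPlane_neg (hA : IsHyperbolicIsometry A) {v w : Fin 3 → ℝ}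
    (hv : v ∈ UpperHyperboloid) (hvw : v ∉ closedHalfPlane (A • w)) :
    A⁻¹ • v ∈ closedHalfPlane (-w) := by
  simpa using hA.inv.smul_mem_closedHalfPlane hv (w := -(A • w)) (by rwa [neg_neg])

end IsHyperbolicIsometry

theorem schottky_ping_pong_general
    (A₁ A₂ : GL (Fin 3) ℝ)
    (hB₁ : ∀ v w : Fin 3 → ℝ,
      B3 ((A₁ : Matrix (Fin 3) (Fin 3) ℝ).mulVec v) ((A₁ : Matrix (Fin 3) (Fin 3) ℝ).mulVec w)
        = B3 v w)
    (hB₂ : ∀ v w : Fin 3 → ℝ,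
      B3 ((A₂ : Matrix (Fin 3) (Fin 3) ℝ).mulVec v) ((A₂ : Matrix (Fin 3) (Fin 3) ℝ).mulVec w)
        = B3 v w)
    (hH₁ : ∀ v ∈ UpperHyperboloid, (A₁ : Matrix (Fin 3) (Fin 3) ℝ).mulVec v ∈ UpperHyperboloid)
    (hH₂ : ∀ v ∈ UpperHyperboloid, (A₂ : Matrix (Fin 3) (Fin 3) ℝ).mulVec v ∈ UpperHyperboloid)
    (w₁ w₂ : Fin 3 → ℝ)
    (hw₁ : 0 < B3 w₁ w₁)
    (hdisj : List.Pairwise Disjoint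
      [closedHalfPlane (-w₁), closedHalfPlane ((A₁ : Matrix (Fin 3) (Fin 3) ℝ).mulVec w₁),
       closedHalfPlane (-w₂), closedHalfPlane ((A₂ : Matrix (Fin 3) (Fin 3) ℝ).mulVec w₂)]) :
    Function.Injective (FreeGroup.lift (![A₁, A₂] : Fin 2 → GL (Fin 3) ℝ)) ∧
    DiscreteTopology (Subgroup.closure ({A₁, A₂} : Set (GL (Fin 3) ℝ))) := by
  set a : Fin 2 → GL (Fin 3) ℝ := ![A₁, A₂]
  set w : Fin 2 → Fin 3 → ℝ := ![w₁, w₂]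
  have hA : ∀ i, IsHyperbolicIsometry (a i) := Fin.forall_fin_two.2 ⟨⟨hB₁, hH₁⟩, ⟨hB₂, hH₂⟩⟩
  set D : Fin 2 × Bool → Set (Fin 3 → ℝ) := fun p =>
    closedHalfPlane (cond p.2 (a p.1 • w p.1) (-w p.1))
  have hD : Pairwise (Disjoint on D) := by
    set X : Fin 4 → Set (Fin 3 → ℝ) := ![D (0, false), D (0, true), D (1, false), D (1, true)]
    have hX : Pairwise (Disjoint on X) :=
      (Std.Symm.pairwise_on X).2 (List.pairwise_ofFn.1 hdisj)
    have hDX : D = X ∘ finProdFinEquiv ∘ Prod.map id finTwoEquiv.symm := by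
      funext ⟨i, b⟩
      fin_cases i <;> cases b <;> rfl
    rw [hDX]
    exact hX.comp_of_injective (finProdFinEquiv.injective.comp
      (Prod.map_injective.2 ⟨injective_id, finTwoEquiv.symm.injective⟩))
  have hpp : FreeGroup.IsPingPong (FreeGroup.lift a) UpperHyperboloid D := by
    refine ⟨fun p => Set.sep_subset _ _, hD, ?_⟩
    rintro ⟨i, _ | _⟩ v hv hvD
    · simpa [D] using (hA i).inv_smul_mem_closedHalfPlane_neg hv hvD
    · simpa [D] using (hA i).smul_mem_closedHalfPlane hv hvD
  obtain ⟨x₀, hx₀, hx₀D⟩ := isPreconnected_upperHyperboloid.exists_forall_notMem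
    (fun p => isClosed_closedHalfPlane _) hpp.subset hD (i := (0, false)) (j := (0, true))
    (by decide) (closedHalfPlane_nonempty (w := -w 0) (by rwa [B3_neg_left, B3_neg_right, neg_neg]))
    (closedHalfPlane_nonempty (w := a 0 • w 0) (by rwa [(hA 0).B3_smul]))
  have hrange : Subgroup.closure {A₁, A₂} = (FreeGroup.lift a).range := by
    rw [FreeGroup.range_lift_eq_closure, Matrix.range_cons_cons_empty]
  exact ⟨hpp.injective hx₀ hx₀D, hrange ▸ hpp.discreteTopology_range
    (fun p => isClosed_closedHalfPlane _) hx₀ hx₀D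
    (Units.continuous_val.matrix_mulVec continuous_const)⟩

/-- (Schottky ping-pong in the hyperboloid model.) If `A₁, A₂` preserve the Lorentzian form
and the upper hyperboloid, and the four half-planes `H̄_{−w₁}, H̄_{A₁w₁}, H̄_{−w₂}, H̄_{A₂w₂}`
are pairwise disjoint, then `A₁, A₂` generate a free discrete subgroup of `GL(3,ℝ)`. -/
theorem schottky_ping_pong
    (A₁ A₂ : GL (Fin 3) ℝ)
    (hB₁ : ∀ v w : Fin 3 → ℝ,
      B3 ((A₁ : Matrix (Fin 3) (Fin 3) ℝ).mulVec v) ((A₁ : Matrix (Fin 3) (Fin 3) ℝ).mulVec w)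
        = B3 v w)
    (hB₂ : ∀ v w : Fin 3 → ℝ,
      B3 ((A₂ : Matrix (Fin 3) (Fin 3) ℝ).mulVec v) ((A₂ : Matrix (Fin 3) (Fin 3) ℝ).mulVec w)
        = B3 v w)
    (hH₁ : ∀ v ∈ UpperHyperboloid, (A₁ : Matrix (Fin 3) (Fin 3) ℝ).mulVec v ∈ UpperHyperboloid)
    (hH₂ : ∀ v ∈ UpperHyperboloid, (A₂ : Matrix (Fin 3) (Fin 3) ℝ).mulVec v ∈ UpperHyperboloid)
    (w₁ w₂ : Fin 3 → ℝ)
    (hw₁ : 0 < B3 w₁ w₁) (hw₂ : 0 < B3 w₂ w₂)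
    (hdisj : List.Pairwise Disjoint
      [closedHalfPlane (-w₁), closedHalfPlane ((A₁ : Matrix (Fin 3) (Fin 3) ℝ).mulVec w₁),
       closedHalfPlane (-w₂), closedHalfPlane ((A₂ : Matrix (Fin 3) (Fin 3) ℝ).mulVec w₂)]) :
    Function.Injective (FreeGroup.lift (![A₁, A₂] : Fin 2 → GL (Fin 3) ℝ)) ∧
    DiscreteTopology (Subgroup.closure ({A₁, A₂} : Set (GL (Fin 3) ℝ))) :=
  schottky_ping_pong_general A₁ A₂ hB₁ hB₂ hH₁ hH₂ w₁ w₂ hw₁ hdisj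
end
end

section
/- (Margulis invariant detects fixed points; Lemma on α(g) = 0.) Let V be a finite-dimensional real vector space, B a nondegenerate symmetric bilinear form on V, and A : V → V a linear map with B(Av, Aw) = B(v,w) for all v, w ∈ V. Suppose the fixed subspace ker(A − id) is the line spanned by a nonzero vector w. Then for any b ∈ V, the affine map g(x) = A x + b has a fixed point in V if and only if B(b, w) = 0. -/
noncomputable section

/-- (Margulis invariant detects fixed points.) If `A` preserves a nondegenerate symmetric
bilinear form `B` and its fixed subspace is the line spanned by `w ≠ 0`, then the affine map
`x ↦ A x + b` has a fixed point iff `B(b, w) = 0`. -/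
theorem margulis_invariant_zero_iff_fixed_point
    {V : Type*} [AddCommGroup V] [Module ℝ V] [FiniteDimensional ℝ V]
    (B : LinearMap.BilinForm ℝ V)
    (hsymm : ∀ v w : V, B v w = B w v)
    (hnondeg : ∀ v : V, (∀ w : V, B v w = 0) → v = 0)
    (A : V →ₗ[ℝ] V)
    (hA : ∀ v w : V, B (A v) (A w) = B v w)
    (w : V) (hw : w ≠ 0)
    (hfix : LinearMap.ker (A - LinearMap.id) = Submodule.span ℝ {w})
    (b : V) :
    (∃ x : V, A x + b = x) ↔ B b w = 0 := by
  -- A fixes w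
  have hAw : A w = w := by
    have hmem : w ∈ LinearMap.ker (A - LinearMap.id) := by
      rw [hfix]; exact Submodule.mem_span_singleton_self w
    have := LinearMap.mem_ker.mp hmem
    simpa [sub_eq_zero] using this
  set f : V →ₗ[ℝ] V := LinearMap.id - A with hf
  set φ : V →ₗ[ℝ] ℝ := B.flip w with hφ
  have hφapp : ∀ u : V, φ u = B u w := fun u => rfl
  -- ker f = span w
  have hkerf : LinearMap.ker f = Submodule.span ℝ {w} := by
    rw [← hfix]
    ext v
    simp only [LinearMap.mem_ker, hf, LinearMap.sub_apply, LinearMap.id_apply, sub_eq_zero]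
    exact eq_comm
  -- range f ≤ ker φ
  have hle : LinearMap.range f ≤ LinearMap.ker φ := by
    rintro _ ⟨v, rfl⟩
    simp only [LinearMap.mem_ker, hφapp, hf, LinearMap.sub_apply, LinearMap.id_apply, map_sub,
      LinearMap.sub_apply]
    have : B (A v) w = B v w := by
      conv_lhs => rw [← hAw]
      exact hA v w
    simp [this]
  -- φ ≠ 0
  have hφne : φ ≠ 0 := by
    intro h
    apply hw
    apply hnondeg
    intro u
    rw [hsymm w u, ← hφapp u, h]
    rfl
  -- finrank computations
  have h1 : Module.finrank ℝ (LinearMap.range f) + Module.finrank ℝ (LinearMap.ker f)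
      = Module.finrank ℝ V := LinearMap.finrank_range_add_finrank_ker f
  have h2 : Module.finrank ℝ (LinearMap.range φ) + Module.finrank ℝ (LinearMap.ker φ)
      = Module.finrank ℝ V := LinearMap.finrank_range_add_finrank_ker φ
  have hker1 : Module.finrank ℝ (LinearMap.ker f) = 1 := by
    rw [hkerf]; exact finrank_span_singleton hw
  have hrangeφ : 1 ≤ Module.finrank ℝ (LinearMap.range φ) := by
    rw [Nat.one_le_iff_ne_zero]
    intro h
    apply hφne
    have : LinearMap.range φ = ⊥ := Submodule.finrank_eq_zero.mp h
    exact LinearMap.range_eq_bot.mp this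
  have heq : LinearMap.range f = LinearMap.ker φ := by
    apply Submodule.eq_of_le_of_finrank_le hle
    omega
  constructor
  · rintro ⟨x, hx⟩
    have hb : f x = b := by
      simp only [hf, LinearMap.sub_apply, LinearMap.id_apply]
      exact (eq_sub_of_add_eq' hx).symm
    have : b ∈ LinearMap.ker φ := heq ▸ ⟨x, hb⟩
    simpa [hφapp] using this
  · intro hb
    have : b ∈ LinearMap.range f := by
      rw [heq]; exact LinearMap.mem_ker.mpr (by simpa [hφapp] using hb)
    obtain ⟨x, hx⟩ := this
    refine ⟨x, ?_⟩
    simp only [hf, LinearMap.sub_apply, LinearMap.id_apply] at hx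
    rw [← hx]; abel
end
end

section
/- (Goldman–Margulis length formula: the Margulis invariant is the derivative of hyperbolic translation length.) Let g ∈ SL(2,ℝ) with tr(g) > 2, and let ℓ(g) ≥ 0 be its hyperbolic translation length, determined by cosh(ℓ(g)/2) = tr(g)/2 (i.e. ℓ(g) = 2 arccosh(tr(g)/2)). Let u be a traceless 2×2 real matrix. Then the function t ↦ ℓ(exp(t u) · g) (defined for t near 0, where exp is the matrix exponential) is differentiable at t = 0 with derivative equal to tr(u · (g − g⁻¹)) / (2 sinh(ℓ(g)/2)). -/
/-!
On hyperbolic elements the conditions `cosh (ℓ / 2) = tr / 2`, `ℓ ≥ 0` force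
`ℓ = 2 arcosh (tr / 2)`, and `exp (t u) g` stays hyperbolic for small `t`, so the derivative
follows from the chain rule and `d/dt tr (exp (t u) g) = tr (u g)` at `t = 0`; the denominator
matches because `sinh (arcosh y) = √(y ^ 2 - 1)`. On the numerator side, Cayley–Hamilton gives
`g⁻¹ = tr g • 1 - g` when `det g = 1`, so `tr (u (g - g⁻¹)) = 2 tr (u g)` for traceless `u`.
-/

noncomputable section

open Matrix Real Filter Topology

def translationLength (g : Matrix (Fin 2) (Fin 2) ℝ) : ℝ :=
  2 * arcosh (g.trace / 2)

theorem eq_translationLength_of_cosh_half {g : Matrix (Fin 2) (Fin 2) ℝ} {L : ℝ}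
    (hcosh : cosh (L / 2) = g.trace / 2) (hL : 0 ≤ L) : L = translationLength g := by
  rw [translationLength, ← hcosh, arcosh_cosh (by linarith)]
  ring

theorem Matrix.adjugate_fin_two_eq_trace_smul_one_sub {R : Type*} [CommRing R]
    (A : Matrix (Fin 2) (Fin 2) R) :
    adjugate A = A.trace • (1 : Matrix (Fin 2) (Fin 2) R) - A := by
  ext i j
  fin_cases i <;> fin_cases j <;> simp [adjugate_fin_two, trace_fin_two]

theorem Matrix.trace_mul_sub_inv_of_det_eq_one {R : Type*} [CommRing R]
    {g u : Matrix (Fin 2) (Fin 2) R} (hdet : g.det = 1) (hu : u.trace = 0) :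
    (u * (g - g⁻¹)).trace = 2 * (u * g).trace := by
  rw [inv_def, hdet, Ring.inverse_one, one_smul, adjugate_fin_two_eq_trace_smul_one_sub]
  simp only [mul_sub, Algebra.mul_smul_comm, mul_one, trace_sub, trace_smul, hu, smul_eq_mul,
    mul_zero, zero_sub, sub_neg_eq_add]
  ring

section

attribute [local instance] Matrix.linftyOpNormedRing Matrix.linftyOpNormedAlgebra

theorem Matrix.hasDerivAt_trace_exp_smul_mul {n : Type*} [Fintype n] [DecidableEq n]
    (u g : Matrix n n ℝ) :
    HasDerivAt (fun t : ℝ => (NormedSpace.exp (t • u) * g).trace) (u * g).trace 0 := by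
  have hexp := hasDerivAt_exp_smul_const (𝕂 := ℝ) u 0
  rw [zero_smul, NormedSpace.exp_zero, one_mul] at hexp
  exact (traceLinearMap n ℝ ℝ).toContinuousLinearMap.hasFDerivAt.comp_hasDerivAt 0
    (hexp.mul_const g)

end

theorem HasDerivAt.two_mul_arcosh_half {f : ℝ → ℝ} {c x : ℝ} (hf : HasDerivAt f c x)
    (hfx : 2 < f x) :
    HasDerivAt (fun t => 2 * arcosh (f t / 2)) (c / Real.sinh (arcosh (f x / 2))) x := by
  have hx : f x / 2 ∈ Set.Ioi 1 := by simp only [Set.mem_Ioi]; linarith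
  refine (((hasDerivAt_arcosh hx).comp x (hf.div_const 2)).const_mul 2).congr_deriv ?_
  rw [sinh_arcosh hx.out.le]
  ring

theorem hasDerivAt_translationLength_exp_smul_mul {g : Matrix (Fin 2) (Fin 2) ℝ}
    (htr : 2 < g.trace) (u : Matrix (Fin 2) (Fin 2) ℝ) :
    HasDerivAt (fun t : ℝ => translationLength (NormedSpace.exp (t • u) * g))
      ((u * g).trace / sinh (translationLength g / 2)) 0 := by
  have hg : 2 < (NormedSpace.exp ((0 : ℝ) • u) * g).trace := by simpa using htr
  simpa [translationLength] using
    HasDerivAt.two_mul_arcosh_half (hasDerivAt_trace_exp_smul_mul u g) hg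

/-- (Goldman–Margulis.) The Margulis invariant is the derivative of the hyperbolic translation
length: if `g ∈ SL(2,ℝ)` has `tr g > 2`, `u` is traceless, and `ℓ` is the translation-length
function (characterized on hyperbolic elements by `cosh(ℓ(m)/2) = tr(m)/2` and `ℓ(m) ≥ 0`),
then `t ↦ ℓ(exp(t u) g)` is differentiable at `0` with derivative
`tr(u (g − g⁻¹)) / (2 sinh(ℓ(g)/2))`. -/
theorem goldman_margulis_length_derivative
    (g : Matrix (Fin 2) (Fin 2) ℝ) (hdet : g.det = 1) (htr : 2 < g.trace)
    (u : Matrix (Fin 2) (Fin 2) ℝ) (hu : u.trace = 0)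
    (ℓ : Matrix (Fin 2) (Fin 2) ℝ → ℝ)
    (hℓ : ∀ m : Matrix (Fin 2) (Fin 2) ℝ, 2 < m.trace →
      Real.cosh (ℓ m / 2) = m.trace / 2 ∧ 0 ≤ ℓ m) :
    HasDerivAt (fun t : ℝ => ℓ (NormedSpace.exp (t • u) * g))
      ((u * (g - g⁻¹)).trace / (2 * Real.sinh (ℓ g / 2))) 0 := by
  have hℓ_eq : ∀ m, 2 < m.trace → ℓ m = translationLength m := fun m hm =>
    eq_translationLength_of_cosh_half (hℓ m hm).1 (hℓ m hm).2
  have hnear : ∀ᶠ t in 𝓝 (0 : ℝ), 2 < (NormedSpace.exp (t • u) * g).trace :=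
    (hasDerivAt_trace_exp_smul_mul u g).continuousAt.eventually
      (lt_mem_nhds (by simpa using htr))
  rw [trace_mul_sub_inv_of_det_eq_one hdet hu, hℓ_eq g htr, mul_div_mul_left _ _ two_ne_zero]
  exact (hasDerivAt_translationLength_exp_smul_mul htr u).congr_of_eventuallyEq
    (hnear.mono fun t ht => hℓ_eq _ ht)
end
end

section
/- (Gluing lemma from the proof of length-spectrum rigidity.) Let n ≥ 2 and let Γ be a group generated by elements x₁, …, x_{n+1}. Let L : Γ → GL(3,ℝ) be a group homomorphism and let v, v' : Γ → ℝ³ be cocycles for L, i.e. v(γη) = v(γ) + L(γ)v(η) and likewise for v'. For i = 1, 2, 3 let S_i be the subgroup of Γ generated by all of x₁, …, x_{n+1} except x_i, and suppose there exists a_i ∈ ℝ³ with v'(γ) − v(γ) = a_i − L(γ)a_i for all γ ∈ S_i. Suppose moreover that the three fixed subspaces ker(L(x₁) − I), ker(L(x₂) − I), ker(L(x₃) − I) are linearly independent, i.e. each one meets the sum of the other two only in 0. Then a₁ = a₂ = a₃, and there exists a ∈ ℝ³ with v'(γ) − v(γ) = a − L(γ)a for all γ ∈ Γ; that is, v and v'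 are cohomologous cocycles. -/
noncomputable section

/-- The fixed subspace `ker(M − I)` of a `3 × 3` matrix `M`, acting on `ℝ³`. -/
def fixSubspace (M : Matrix (Fin 3) (Fin 3) ℝ) : Submodule ℝ (Fin 3 → ℝ) :=
  LinearMap.ker (M.mulVecLin - LinearMap.id)

/-- (Gluing lemma from the proof of length-spectrum rigidity.) Let `Γ` be generated by
`x₁, …, x_{n+1}` (`n ≥ 2`), let `v, v'` be cocycles for `L : Γ → GL(3,ℝ)` that are
cohomologous on each of the subgroups `S₁, S₂, S₃` (generated by all generators but one),
via vectors `a₁, a₂, a₃`. If the fixed subspaces of `L(x₁), L(x₂), L(x₃)` are linearly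
independent, then `a₁ = a₂ = a₃` and `v, v'` are cohomologous on all of `Γ`. -/
theorem gluing_lemma_cohomologous
    (n : ℕ) (hn : 2 ≤ n)
    {Γ : Type*} [Group Γ] (x : Fin (n + 1) → Γ)
    (hgen : Subgroup.closure (Set.range x) = ⊤)
    (L : Γ →* GL (Fin 3) ℝ)
    (v v' : Γ → (Fin 3 → ℝ))
    (hv : ∀ γ η : Γ, v (γ * η) = v γ + ((L γ : Matrix (Fin 3) (Fin 3) ℝ)).mulVec (v η))
    (hv' : ∀ γ η : Γ, v' (γ * η) = v' γ + ((L γ : Matrix (Fin 3) (Fin 3) ℝ)).mulVec (v' η))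
    (a : Fin 3 → (Fin 3 → ℝ))
    (ha : ∀ i : Fin 3,
      ∀ γ ∈ Subgroup.closure (x '' {j : Fin (n + 1) | j ≠ Fin.castLE (by omega) i}),
        v' γ - v γ = a i - ((L γ : Matrix (Fin 3) (Fin 3) ℝ)).mulVec (a i))
    (hind₀ : fixSubspace (L (x (Fin.castLE (by omega) (0 : Fin 3)))) ⊓
        (fixSubspace (L (x (Fin.castLE (by omega) (1 : Fin 3)))) ⊔
         fixSubspace (L (x (Fin.castLE (by omega) (2 : Fin 3))))) = ⊥)
    (hind₁ : fixSubspace (L (x (Fin.castLE (by omega) (1 : Fin 3)))) ⊓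
        (fixSubspace (L (x (Fin.castLE (by omega) (0 : Fin 3)))) ⊔
         fixSubspace (L (x (Fin.castLE (by omega) (2 : Fin 3))))) = ⊥)
    (hind₂ : fixSubspace (L (x (Fin.castLE (by omega) (2 : Fin 3)))) ⊓
        (fixSubspace (L (x (Fin.castLE (by omega) (0 : Fin 3)))) ⊔
         fixSubspace (L (x (Fin.castLE (by omega) (1 : Fin 3))))) = ⊥) :
    (a 0 = a 1 ∧ a 1 = a 2) ∧
    ∃ aa : Fin 3 → ℝ, ∀ γ : Γ,
      v' γ - v γ = aa - ((L γ : Matrix (Fin 3) (Fin 3) ℝ)).mulVec aa := by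

  classical
  have h3n : (3 : ℕ) ≤ n + 1 := by omega
  set g : Fin 3 → Γ := fun j => x (Fin.castLE (by omega) j) with hg
  have hcastne : ∀ i j : Fin 3, i ≠ j →
      (Fin.castLE (show (3:ℕ) ≤ n + 1 by omega) j) ≠ Fin.castLE (by omega) i := by
    intro i j hij h
    exact hij (by simpa [Fin.ext_iff] using h.symm)
  -- x_j belongs to S_i when i ≠ j
  have hw : ∀ i j : Fin 3, i ≠ j →
      v' (g j) - v (g j) = a i - ((L (g j) : Matrix (Fin 3) (Fin 3) ℝ)).mulVec (a i) := by
    intro i j hij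
    refine ha i (g j) (Subgroup.subset_closure ?_)
    exact ⟨Fin.castLE (by omega) j, hcastne i j hij, rfl⟩
  have key : ∀ i i' j : Fin 3, i ≠ j → i' ≠ j →
      (a i - a i') ∈ fixSubspace (L (g j)) := by
    intro i i' j h h'
    have e : a i - ((L (g j) : Matrix (Fin 3) (Fin 3) ℝ)).mulVec (a i)
        = a i' - ((L (g j) : Matrix (Fin 3) (Fin 3) ℝ)).mulVec (a i') :=
      (hw i j h).symm.trans (hw i' j h')
    simp only [fixSubspace, LinearMap.mem_ker, LinearMap.sub_apply,
      Matrix.mulVecLin_apply, LinearMap.id_apply, Matrix.mulVec_sub]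
    funext k
    have ek := congrFun e k
    simp only [Pi.sub_apply, Pi.zero_apply] at ek ⊢
    linarith
  have h02 : a 0 - a 2 = 0 := by
    have hmem : a 0 - a 2 ∈ fixSubspace (L (g 1)) ⊓
        (fixSubspace (L (g 0)) ⊔ fixSubspace (L (g 2))) := by
      refine ⟨key 0 2 1 (by decide) (by decide), ?_⟩
      have : a 0 - a 2 = (a 1 - a 2) + (a 0 - a 1) := by abel
      rw [this]
      exact Submodule.add_mem_sup (key 1 2 0 (by decide) (by decide))
        (key 0 1 2 (by decide) (by decide))
    have := hind₁ ▸ hmem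
    simpa using this
  have ha02 : a 0 = a 2 := sub_eq_zero.mp h02
  have h01 : a 0 - a 1 = 0 := by
    have hmem : a 0 - a 1 ∈ fixSubspace (L (g 0)) ⊓
        (fixSubspace (L (g 1)) ⊔ fixSubspace (L (g 2))) := by
      constructor
      · have e : a 0 - a 1 = -(a 1 - a 2) := by rw [ha02]; abel
        rw [e]
        exact Submodule.neg_mem _ (key 1 2 0 (by decide) (by decide))
      · exact Submodule.mem_sup_right (key 0 1 2 (by decide) (by decide))
    have := hind₀ ▸ hmem
    simpa using this
  have ha01 : a 0 = a 1 := sub_eq_zero.mp h01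
  refine ⟨⟨ha01, ha01 ▸ ha02⟩, a 0, ?_⟩
  -- cocycle algebra: show the set where the identity holds is a subgroup containing all gens
  have hv1 : v 1 = 0 := by
    have h := hv 1 1
    simp only [one_mul, map_one, Units.val_one, Matrix.one_mulVec] at h
    exact (left_eq_add.mp h)
  have hv1' : v' 1 = 0 := by
    have h := hv' 1 1
    simp only [one_mul, map_one, Units.val_one, Matrix.one_mulVec] at h
    exact (left_eq_add.mp h)
  let K : Subgroup Γ :=
    { carrier := {γ | v' γ - v γ = a 0 - ((L γ : Matrix (Fin 3) (Fin 3) ℝ)).mulVec (a 0)}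
      one_mem' := by simp [hv1, hv1']
      mul_mem' := by
        intro γ η hγ hη
        simp only [Set.mem_setOf_eq] at hγ hη ⊢
        have e1 : v' γ = v γ + (a 0 - ((L γ : Matrix (Fin 3) (Fin 3) ℝ)).mulVec (a 0)) := by
          rw [← hγ]; abel
        have e2 : v' η = v η + (a 0 - ((L η : Matrix (Fin 3) (Fin 3) ℝ)).mulVec (a 0)) := by
          rw [← hη]; abel
        rw [hv γ η, hv' γ η, e1, e2, map_mul, Units.val_mul, ← Matrix.mulVec_mulVec,
          Matrix.mulVec_add, Matrix.mulVec_sub]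
        abel
      inv_mem' := by
        intro γ hγ
        simp only [Set.mem_setOf_eq] at hγ ⊢
        have hNM : ((L γ⁻¹ : GL (Fin 3) ℝ) : Matrix (Fin 3) (Fin 3) ℝ) *
            ((L γ : GL (Fin 3) ℝ) : Matrix (Fin 3) (Fin 3) ℝ) = 1 := by
          rw [← Units.val_mul, ← map_mul, inv_mul_cancel, map_one, Units.val_one]
        have cancel : ∀ u : Fin 3 → ℝ,
            ((L γ⁻¹ : GL (Fin 3) ℝ) : Matrix (Fin 3) (Fin 3) ℝ).mulVec
              (((L γ : GL (Fin 3) ℝ) : Matrix (Fin 3) (Fin 3) ℝ).mulVec u) = u := by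
          intro u; rw [Matrix.mulVec_mulVec, hNM, Matrix.one_mulVec]
        have hc := hv γ γ⁻¹
        have hc' := hv' γ γ⁻¹
        rw [mul_inv_cancel, hv1] at hc
        rw [mul_inv_cancel, hv1'] at hc'
        have eγ : ((L γ : Matrix (Fin 3) (Fin 3) ℝ)).mulVec (v γ⁻¹) = - v γ := by
          exact eq_neg_of_add_eq_zero_right hc.symm
        have eγ' : ((L γ : Matrix (Fin 3) (Fin 3) ℝ)).mulVec (v' γ⁻¹) = - v' γ := by
          exact eq_neg_of_add_eq_zero_right hc'.symm
        calc v' γ⁻¹ - v γ⁻¹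
            = ((L γ⁻¹ : GL (Fin 3) ℝ) : Matrix (Fin 3) (Fin 3) ℝ).mulVec
              (((L γ : GL (Fin 3) ℝ) : Matrix (Fin 3) (Fin 3) ℝ).mulVec (v' γ⁻¹ - v γ⁻¹)) := by
              rw [cancel]
          _ = ((L γ⁻¹ : GL (Fin 3) ℝ) : Matrix (Fin 3) (Fin 3) ℝ).mulVec (v γ - v' γ) := by
              rw [Matrix.mulVec_sub, eγ, eγ']; congr 1; abel
          _ = ((L γ⁻¹ : GL (Fin 3) ℝ) : Matrix (Fin 3) (Fin 3) ℝ).mulVec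
              (((L γ : GL (Fin 3) ℝ) : Matrix (Fin 3) (Fin 3) ℝ).mulVec (a 0) - a 0) := by
              congr 1
              rw [← neg_sub (v' γ) (v γ), hγ, neg_sub]
          _ = a 0 - ((L γ⁻¹ : GL (Fin 3) ℝ) : Matrix (Fin 3) (Fin 3) ℝ).mulVec (a 0) := by
              rw [Matrix.mulVec_sub, cancel] }
  have hKtop : ∀ γ : Γ, γ ∈ K := by
    intro γ
    have : Subgroup.closure (Set.range x) ≤ K := by
      rw [Subgroup.closure_le]
      rintro _ ⟨k, rfl⟩
      by_cases hk : k = Fin.castLE (by omega) (0 : Fin 3)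
      · have : x k ∈ Subgroup.closure
            (x '' {j : Fin (n + 1) | j ≠ Fin.castLE (by omega) (1 : Fin 3)}) := by
          refine Subgroup.subset_closure ⟨k, ?_, rfl⟩
          rw [hk]
          exact hcastne 1 0 (by decide)
        have h := ha 1 (x k) this
        show v' (x k) - v (x k) = _
        rw [h, ← ha01]
      · have : x k ∈ Subgroup.closure
            (x '' {j : Fin (n + 1) | j ≠ Fin.castLE (by omega) (0 : Fin 3)}) := by
          exact Subgroup.subset_closure ⟨k, hk, rfl⟩
        exact ha 0 (x k) this
    exact this (hgen ▸ Subgroup.mem_top γ)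
  intro γ
  exact hKtop γ
end
end
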